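/- Let A = T[0,a_1,...,a_{n-1}] be a symmetric Boolean Toeplitz matrix with min S_A = s_0 and 2 s_0 > n, and m = 2 s_0 - n. Then the number of connected components of G(A) equals m plus the number of connected components of G(T[a_m, ..., a_{n-1}]). -/

import Mathlib

/-- Difference of labels of two vertices of `Fin n`. -/
def tdiff {n : ℕ} (u v : Fin n) : ℕ := max u.val v.val - min u.val v.val

/-- The (Boolean) Toeplitz graph on vertex labels `{1,…,n}` (encoded as `Fin n`,
where vertex `i : Fin n` carries label `i+1`): distinct vertices are adjacent
iff the difference of their labels lies in `S`. -/
def TGraph (n : ℕ) (S : Set ℕ) : SimpleGraph (Fin n) where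
  Adj u v := u ≠ v ∧ tdiff u v ∈ S
  symm := ⟨by
    intro u v h
    exact ⟨h.1.symm, by simpa [tdiff, Nat.max_comm, Nat.min_comm] using h.2⟩⟩
  loopless := ⟨fun u h => h.1 rfl⟩

/-- `G` is `d`-reachable: any two vertices whose labels differ by `d` are joined by a walk. -/
def dReachable {n : ℕ} (G : SimpleGraph (Fin n)) (d : ℕ) : Prop :=
  ∀ u v : Fin n, tdiff u v = d → G.Reachable u v

/-- The contraction `G/ℤ_d`: vertices are the residue classes modulo `d`,
and two distinct classes are adjacent iff some representatives are adjacent in `G`. -/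
def contract {n : ℕ} (G : SimpleGraph (Fin n)) (d : ℕ) : SimpleGraph (Fin d) where
  Adj i j := i ≠ j ∧ ∃ x y : Fin n, G.Adj x y ∧ (x : ℕ) % d = (i : ℕ) ∧ (y : ℕ) % d = (j : ℕ)
  symm := ⟨by
    rintro i j ⟨h1, x, y, hxy, hx, hy⟩
    exact ⟨h1.symm, y, x, hxy.symm, hy, hx⟩⟩
  loopless := ⟨fun i h => h.1 rfl⟩

open SimpleGraph

section CC
variable {α β : Type*} {G : SimpleGraph α} {H : SimpleGraph β}

private def sumCCfun (G : SimpleGraph α) (H : SimpleGraph β) :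
    α ⊕ β → G.ConnectedComponent ⊕ H.ConnectedComponent
  | Sum.inl a => Sum.inl (G.connectedComponentMk a)
  | Sum.inr b => Sum.inr (H.connectedComponentMk b)

private lemma sumCCfun_adj {u v : α ⊕ β} (h : (G ⊕g H).Adj u v) :
    sumCCfun G H u = sumCCfun G H v := by
  cases u <;> cases v <;> simp_all [sumCCfun, SimpleGraph.sum]
  · exact h.reachable
  · exact h.reachable

private lemma sumCCfun_reach {u v : α ⊕ β} (h : (G ⊕g H).Reachable u v) :
    sumCCfun G H u = sumCCfun G H v := by
  obtain ⟨p⟩ := h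
  induction p with
  | nil => rfl
  | cons h p ih => exact (sumCCfun_adj h).trans ih

def sumCCEquiv (G : SimpleGraph α) (H : SimpleGraph β) :
    (G ⊕g H).ConnectedComponent ≃ G.ConnectedComponent ⊕ H.ConnectedComponent where
  toFun := Quot.lift (sumCCfun G H) fun _ _ h => sumCCfun_reach h
  invFun := Sum.elim
    (Quot.lift (fun a => (G ⊕g H).connectedComponentMk (Sum.inl a))
      (fun a b (h : G.Reachable a b) =>
        SimpleGraph.ConnectedComponent.sound (h.map Embedding.sumInl.toHom)))
    (Quot.lift (fun b => (G ⊕g H).connectedComponentMk (Sum.inr b))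
      (fun a b (h : H.Reachable a b) =>
        SimpleGraph.ConnectedComponent.sound (h.map Embedding.sumInr.toHom)))
  left_inv := by
    apply SimpleGraph.ConnectedComponent.ind
    rintro (a | b) <;> rfl
  right_inv := by
    rintro (c | c) <;> induction c using SimpleGraph.ConnectedComponent.ind <;> rfl

def botCCEquiv (α : Type*) : (⊥ : SimpleGraph α).ConnectedComponent ≃ α where
  toFun := Quot.lift id (fun a b h => reachable_bot.mp h)
  invFun := SimpleGraph.connectedComponentMk ⊥
  left_inv := by apply SimpleGraph.ConnectedComponent.ind; intro a; rfl
  right_inv := fun a => rfl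

end CC

section Iso

variable (k m : ℕ) (S : Set ℕ)

def theIso (hk : 1 ≤ k) (hm : 1 ≤ m)
    (hS : ∀ s ∈ S, k + m ≤ s ∧ s ≤ 2*k + m - 1) :
    ((⊥ : SimpleGraph (Fin m)) ⊕g TGraph (2*k) ((fun s => s - m) '' S))
      ≃g TGraph (2*k+m) S where
  toFun x := match x with
    | Sum.inl i => ⟨k + i, by have := i.isLt; omega⟩
    | Sum.inr j => if h : (j : ℕ) < k then ⟨j, by omega⟩
        else ⟨(j : ℕ) + m, by have := j.isLt; omega⟩
  invFun u :=
    if h1 : (u : ℕ) < k then Sum.inr ⟨u, by omega⟩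
    else if h2 : (u : ℕ) < k + m then Sum.inl ⟨(u : ℕ) - k, by omega⟩
    else Sum.inr ⟨(u : ℕ) - m, by have := u.isLt; omega⟩
  left_inv := by
    rintro (i | j)
    · have hi := i.isLt
      simp only []
      rw [dif_neg (by omega), dif_pos (by omega)]
      simp [Fin.ext_iff]
    · have hj := j.isLt
      by_cases h : (j : ℕ) < k
      · simp only [dif_pos h]
      · simp only [dif_neg h]
        rw [dif_neg (by simp; omega), dif_neg (by simp; omega)]
        simp [Fin.ext_iff]
  right_inv := by
    intro u
    have hu := u.isLt
    by_cases h1 : (u : ℕ) < k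
    · simp only [dif_pos h1]
    · by_cases h2 : (u : ℕ) < k + m
      · simp only [dif_neg h1, dif_pos h2]
        simp [Fin.ext_iff]; omega
      · simp only [dif_neg h1, dif_neg h2]
        rw [dif_neg (by simp; omega)]
        simp [Fin.ext_iff]; omega
  map_rel_iff' := by
    rintro (i | j) (i' | j')
    all_goals simp only [Equiv.coe_fn_mk]
    · -- inl inl
      have hi := i.isLt; have hi' := i'.isLt
      constructor
      · rintro ⟨hne, hmem⟩
        have := hS _ hmem
        exfalso
        simp only [tdiff] at this
        omega
      · rintro h
        exact absurd h (by simp [SimpleGraph.sum])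
    · -- inl inr
      have hi := i.isLt; have hj := j'.isLt
      constructor
      · rintro ⟨hne, hmem⟩
        have h := hS _ hmem
        exfalso
        by_cases hc : (j' : ℕ) < k
        · simp only [dif_pos hc, tdiff] at hmem h ⊢; omega
        · simp only [dif_neg hc, tdiff] at hmem h ⊢; omega
      · rintro h
        exact absurd h (by simp [SimpleGraph.sum])
    · -- inr inl
      have hi := i'.isLt; have hj := j.isLt
      constructor
      · rintro ⟨hne, hmem⟩
        have h := hS _ hmem
        exfalso
        by_cases hc : (j : ℕ) < k
        · simp only [dif_pos hc, tdiff] at hmem h ⊢; omega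
        · simp only [dif_neg hc, tdiff] at hmem h ⊢; omega
      · rintro h
        exact absurd h (by simp [SimpleGraph.sum])
    · -- inr inr
      have hj := j.isLt; have hj' := j'.isLt
      show (TGraph (2*k+m) S).Adj _ _ ↔ (TGraph (2*k) _).Adj j j'
      constructor
      · rintro ⟨hne, hmem⟩
        have h := hS _ hmem
        by_cases hc : (j : ℕ) < k <;> by_cases hc' : (j' : ℕ) < k
        · simp only [dif_pos hc, dif_pos hc', tdiff] at hmem h; exfalso; omega
        · simp only [dif_pos hc, dif_neg hc', tdiff] at hmem h
          refine ⟨by simp [Fin.ext_iff]; omega, ?_⟩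
          refine ⟨_, hmem, ?_⟩
          simp [tdiff]; omega
        · simp only [dif_neg hc, dif_pos hc', tdiff] at hmem h
          refine ⟨by simp [Fin.ext_iff]; omega, ?_⟩
          refine ⟨_, hmem, ?_⟩
          simp [tdiff]; omega
        · simp only [dif_neg hc, dif_neg hc', tdiff] at hmem h; exfalso; omega
      · rintro ⟨hne, s, hsS, hs⟩
        have h := hS _ hsS
        have hne' : (j : ℕ) ≠ (j' : ℕ) := by simpa [Fin.ext_iff] using hne
        simp only [tdiff] at hs
        by_cases hc : (j : ℕ) < k <;> by_cases hc' : (j' : ℕ) < k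
        · exfalso; omega
        · simp only [dif_pos hc, dif_neg hc']
          refine ⟨by simp [Fin.ext_iff]; omega, ?_⟩
          have : tdiff (⟨(j:ℕ), by omega⟩ : Fin (2*k+m)) ⟨(j':ℕ)+m, by omega⟩ = s := by
            simp [tdiff]; omega
          rwa [this]
        · simp only [dif_neg hc, dif_pos hc']
          refine ⟨by simp [Fin.ext_iff]; omega, ?_⟩
          have : tdiff (⟨(j:ℕ)+m, by omega⟩ : Fin (2*k+m)) ⟨(j':ℕ), by omega⟩ = s := by
            simp [tdiff]; omega
          rwa [this]
        · exfalso; omega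

end Iso

theorem auxkey (k m : ℕ) (S : Set ℕ) (hk : 1 ≤ k) (hm : 1 ≤ m)
    (hS : ∀ s ∈ S, k + m ≤ s ∧ s ≤ 2*k + m - 1) :
    Nat.card (TGraph (2*k+m) S).ConnectedComponent
      = m + Nat.card (TGraph (2*k) ((fun s => s - m) '' S)).ConnectedComponent := by
  rw [← Nat.card_congr (theIso k m S hk hm hS).connectedComponentEquiv,
      Nat.card_congr (sumCCEquiv _ _), Nat.card_sum,
      Nat.card_congr (botCCEquiv (Fin m)), Nat.card_eq_fintype_card, Fintype.card_fin]

/-- With `s₀ = min S_A`, `2 s₀ > n`, `m = 2 s₀ - n`: the number of connected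
components of `G(A)` equals `m` plus the number of connected components of
`G(T[a_m,…,a_{n-1}])`. -/
theorem stmt3 (n : ℕ) (S : Finset ℕ) (hS : S.Nonempty)
    (hsub : ∀ s ∈ S, 1 ≤ s ∧ s ≤ n - 1) (h2 : n < 2 * S.min' hS) :
    Nat.card (TGraph n ↑S).ConnectedComponent
      = (2 * S.min' hS - n) +
        Nat.card (TGraph (n - (2 * S.min' hS - n))
          ((fun s => s - (2 * S.min' hS - n)) '' ↑S)).ConnectedComponent := by
  set s0 := S.min' hS with hs0
  obtain ⟨h1s, h2s⟩ := hsub s0 (S.min'_mem hS)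
  set m := 2 * s0 - n with hm
  set k := n - s0 with hk
  have hn1 : 1 ≤ n := by omega
  have key := auxkey k m ↑S (by omega) (by omega) ?_
  · have e2 : n - m = 2 * k := by omega
    rw [e2, ← key, show n = 2 * k + m by omega]
  · intro s hs
    obtain ⟨h1, h2'⟩ := hsub s hs
    have := S.min'_le s hs
    constructor <;> omega
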